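/- arXiv:1707.01678 — 4 statements merged into one kernel-verified Lean document; each statement's English description precedes it below -/
import Mathlib

section
/- Let (A_n) be a sequence of independent events in a probability space and for each n let E_n be an event independent of A_n. Assume P(E_n) → 0 as n → ∞, and set B_n = A_n \ E_n. If ∑_n P(A_n) = ∞, then almost surely infinitely many of the events B_n occur (i.e., P(limsup B_n) = 1). -/
open MeasureTheory ProbabilityTheory Filter Finset
open scoped ENNReal Topology

/-!
Fix `m`; it suffices that `⋂ n ≥ m, Bₙᶜ` is null. Given `c`, go far enough out that
`P(Eₙ) ≤ ε` and take a block of consecutive indices on which `∑ P(Aₙ)` lies in `[c, c + 1]`.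
Outside the contamination `⋃ (Aₙ ∩ Eₙ)` of the block, missing every `Bₙ` means missing every
`Aₙ`. By independence the latter has probability `∏ (1 - P(Aₙ)) ≤ (1 + ∑ P(Aₙ))⁻¹ ≤ c⁻¹`, while
the contamination has probability at most `∑ P(Aₙ) P(Eₙ) ≤ (c + 1) ε`. With
`ε = (c (c + 1))⁻¹` this bounds `P(⋂ n ≥ m, Bₙᶜ)` by `2 / c`.
-/

lemma exists_le_and_le_add_of_forall_succ_le_add {α : Type*} [LinearOrder α] [Add α]
    [AddRightMono α] {S : ℕ → α} {c d : α} (h0 : S 0 ≤ c + d)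
    (hstep : ∀ k, S (k + 1) ≤ S k + d) (hc : ∃ k, c ≤ S k) :
    ∃ k, c ≤ S k ∧ S k ≤ c + d := by
  classical
  refine ⟨Nat.find hc, Nat.find_spec hc, ?_⟩
  rcases h : Nat.find hc with _ | k
  · exact h0
  · have hk : S k < c := not_le.1 (Nat.find_min hc (by omega))
    exact (hstep k).trans (add_le_add_left hk.le d)

namespace ENNReal

lemma one_sub_mul_one_add_le_one (p : ℝ≥0∞) : (1 - p) * (1 + p) ≤ 1 := by
  rcases le_total p 1 with hp | hp
  · calc (1 - p) * (1 + p) = (1 - p) + (1 - p) * p := by ring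
      _ ≤ (1 - p) + p := by gcongr; exact mul_le_of_le_one_left' tsub_le_self
      _ = 1 := tsub_add_cancel_of_le hp
  · simp [tsub_eq_zero_of_le hp]

lemma one_add_sum_le_prod_one_add {ι : Type*} (s : Finset ι) (p : ι → ℝ≥0∞) :
    1 + ∑ i ∈ s, p i ≤ ∏ i ∈ s, (1 + p i) := by
  classical
  induction s using Finset.induction_on with
  | empty => simp
  | insert a s ha ih =>
    rw [sum_insert ha, prod_insert ha]
    calc 1 + (p a + ∑ i ∈ s, p i) = (1 + ∑ i ∈ s, p i) + p a * 1 := by ring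
      _ ≤ ∏ i ∈ s, (1 + p i) + p a * ∏ i ∈ s, (1 + p i) := by
          gcongr
          exact le_self_add.trans ih
      _ = (1 + p a) * ∏ i ∈ s, (1 + p i) := by ring

lemma prod_one_sub_le_inv_one_add_sum {ι : Type*} (s : Finset ι) (p : ι → ℝ≥0∞) :
    ∏ i ∈ s, (1 - p i) ≤ (1 + ∑ i ∈ s, p i)⁻¹ := by
  rw [ENNReal.le_inv_iff_mul_le]
  calc (∏ i ∈ s, (1 - p i)) * (1 + ∑ i ∈ s, p i)
      ≤ (∏ i ∈ s, (1 - p i)) * ∏ i ∈ s, (1 + p i) := by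
        gcongr
        exact one_add_sum_le_prod_one_add s p
    _ = ∏ i ∈ s, (1 - p i) * (1 + p i) := prod_mul_distrib.symm
    _ ≤ 1 := prod_le_one' fun i _ => one_sub_mul_one_add_le_one (p i)

lemma tsum_comp_add_eq_top {f : ℕ → ℝ≥0∞} (hf : ∑' i, f i = ∞) (hfin : ∀ i, f i ≠ ∞) (k : ℕ) :
    ∑' i, f (i + k) = ∞ := by
  rw [← ENNReal.summable.sum_add_tsum_nat_add' (k := k)] at hf
  exact (ENNReal.add_eq_top.1 hf).resolve_left (ENNReal.sum_ne_top.2 fun i _ => hfin i)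

lemma exists_le_sum_range_le_add_one {f : ℕ → ℝ≥0∞} (hf1 : ∀ i, f i ≤ 1)
    (hf : ∑' i, f i = ∞) {c : ℝ≥0∞} (hc : c ≠ ∞) :
    ∃ n, c ≤ ∑ i ∈ range n, f i ∧ ∑ i ∈ range n, f i ≤ c + 1 := by
  refine exists_le_and_le_add_of_forall_succ_le_add (by simp) (fun n => ?_) ?_
  · rw [sum_range_succ]
    gcongr
    exact hf1 n
  · have := ENNReal.tendsto_nat_tsum f
    rw [hf] at this
    exact (this.eventually (le_mem_nhds hc.lt_top)).exists

end ENNReal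

section

variable {Ω ι : Type*} {mΩ : MeasurableSpace Ω} {μ : Measure Ω} {A E : ι → Set Ω}

lemma MeasureTheory.measure_biInter_compl_sdiff_le (s : Finset ι) :
    μ (⋂ i ∈ s, (A i \ E i)ᶜ) ≤ μ (⋂ i ∈ s, (A i)ᶜ) + ∑ i ∈ s, μ (A i ∩ E i) := by
  calc μ (⋂ i ∈ s, (A i \ E i)ᶜ) ≤ μ ((⋂ i ∈ s, (A i)ᶜ) ∪ ⋃ i ∈ s, A i ∩ E i) := by
        refine measure_mono fun ω hω => ?_
        simp only [Set.mem_iInter, Set.mem_compl_iff, Set.mem_sdiff, not_and, not_not] at hω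
        by_cases h : ∃ i ∈ s, ω ∈ A i
        · obtain ⟨i, hi, hωA⟩ := h
          exact Or.inr (Set.mem_biUnion hi ⟨hωA, hω i hi hωA⟩)
        · push Not at h
          exact Or.inl (Set.mem_iInter₂.2 h)
    _ ≤ μ (⋂ i ∈ s, (A i)ᶜ) + ∑ i ∈ s, μ (A i ∩ E i) :=
        (measure_union_le _ _).trans (by gcongr; exact measure_biUnion_finset_le s _)

namespace ProbabilityTheory.iIndepSet

lemma measure_biInter_compl (hA : ∀ i, MeasurableSet (A i)) (h : iIndepSet A μ)
    (s : Finset ι) : μ (⋂ i ∈ s, (A i)ᶜ) = ∏ i ∈ s, (1 - μ (A i)) := by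
  have := h.isProbabilityMeasure
  rw [iIndep.meas_biInter h fun i _ =>
    (MeasurableSpace.measurableSet_generateFrom (Set.mem_singleton _)).compl]
  exact prod_congr rfl fun i _ => prob_compl_eq_one_sub (hA i)

lemma measure_biInter_compl_sdiff_le (hA : ∀ i, MeasurableSet (A i)) (h : iIndepSet A μ)
    {s : Finset ι} (hAE : ∀ i ∈ s, μ (A i ∩ E i) = μ (A i) * μ (E i))
    {ε : ℝ≥0∞} (hε : ∀ i ∈ s, μ (E i) ≤ ε) :
    μ (⋂ i ∈ s, (A i \ E i)ᶜ) ≤ (1 + ∑ i ∈ s, μ (A i))⁻¹ + (∑ i ∈ s, μ (A i)) * ε := by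
  refine (MeasureTheory.measure_biInter_compl_sdiff_le s).trans (add_le_add ?_ ?_)
  · rw [h.measure_biInter_compl hA]
    exact ENNReal.prod_one_sub_le_inv_one_add_sum s _
  · rw [sum_mul]
    refine sum_le_sum fun i hi => ?_
    rw [hAE i hi]
    gcongr
    exact hε i hi

lemma measure_iInter_ge_compl_sdiff_eq_zero {A E : ℕ → Set Ω}
    (hA : ∀ n, MeasurableSet (A n)) (h : iIndepSet A μ)
    (hAE : ∀ n, μ (A n ∩ E n) = μ (A n) * μ (E n))
    (hE0 : Tendsto (fun n => μ (E n)) atTop (𝓝 0)) (hsum : ∑' n, μ (A n) = ∞) (m : ℕ) :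
    μ (⋂ n ≥ m, (A n \ E n)ᶜ) = 0 := by
  have := h.isProbabilityMeasure
  have hbound (c : ℕ) : μ (⋂ n ≥ m, (A n \ E n)ᶜ) ≤ 2 * (c : ℝ≥0∞)⁻¹ := by
    set ε : ℝ≥0∞ := (c : ℝ≥0∞)⁻¹ * ((c : ℝ≥0∞) + 1)⁻¹
    have hε : 0 < ε := ENNReal.mul_pos (by simp) (by simp)
    obtain ⟨N, hN⟩ := eventually_atTop.1 (hE0.eventually (ge_mem_nhds hε))
    set k := max m N
    obtain ⟨n, hcn, hnc⟩ := ENNReal.exists_le_sum_range_le_add_one (fun _ => prob_le_one)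
      (ENNReal.tsum_comp_add_eq_top hsum (fun _ => measure_ne_top _ _) k)
      (ENNReal.natCast_ne_top c)
    calc μ (⋂ n ≥ m, (A n \ E n)ᶜ) ≤ μ (⋂ i ∈ range n, (A (i + k) \ E (i + k))ᶜ) :=
          measure_mono <| Set.iInter₂_mono' fun i _ =>
            ⟨i + k, le_add_left (le_max_left m N), subset_rfl⟩
      _ ≤ (1 + ∑ i ∈ range n, μ (A (i + k)))⁻¹ + (∑ i ∈ range n, μ (A (i + k))) * ε :=
          (h.precomp (add_left_injective k)).measure_biInter_compl_sdiff_le (fun _ => hA _)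
            (fun _ _ => hAE _) (fun _ _ => hN _ (le_add_left (le_max_right m N)))
      _ ≤ (c : ℝ≥0∞)⁻¹ + ((c : ℝ≥0∞) + 1) * ε := by
          gcongr
          exact hcn.trans le_add_self
      _ = 2 * (c : ℝ≥0∞)⁻¹ := by
          rw [mul_left_comm, ENNReal.mul_inv_cancel (by simp) (by simp), mul_one, two_mul]
  have hlim : Tendsto (fun c : ℕ => 2 * (c : ℝ≥0∞)⁻¹) atTop (𝓝 0) := by
    simpa using
      ENNReal.Tendsto.const_mul ENNReal.tendsto_inv_nat_nhds_zero (.inr ENNReal.ofNat_ne_top)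
  exact le_antisymm (ge_of_tendsto' hlim hbound) bot_le

end ProbabilityTheory.iIndepSet

end

theorem contaminated_borel_cantelli_two_general
    {Ω : Type*} [MeasureSpace Ω] [IsProbabilityMeasure (ℙ : Measure Ω)]
    (A E : ℕ → Set Ω)
    (hA : ∀ n, MeasurableSet (A n))
    (hAindep : iIndepSet A ℙ)
    (hAE : ∀ n, ℙ (A n ∩ E n) = ℙ (A n) * ℙ (E n))
    (hE0 : Tendsto (fun n => ℙ (E n)) atTop (nhds 0))
    (B : ℕ → Set Ω) (hB : ∀ n, B n = A n \ E n)
    (hsum : ∑' n, ℙ (A n) = ∞) :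
    ℙ (limsup B atTop) = 1 := by
  obtain rfl : B = fun n => A n \ E n := funext hB
  refine (measure_congr (ae_eq_univ.2 ?_)).trans measure_univ
  rw [limsup_compl, liminf_eq_iSup_iInf_of_nat]
  exact measure_iUnion_null fun m =>
    hAindep.measure_iInter_ge_compl_sdiff_eq_zero hA hAE hE0 hsum m

/-- **Contaminated second Borel–Cantelli.** If the events `A n` are independent,
each `E n` is independent of `A n` (i.e. `P (A n ∩ E n) = P (A n) * P (E n)`),
`P (E n) → 0`, and `∑ P (A n) = ∞`, then almost surely infinitely many of the
events `B n = A n \ E n` occur, i.e. `P (limsup B) = 1`. -/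
theorem contaminated_borel_cantelli_two
    {Ω : Type*} [MeasureSpace Ω] [IsProbabilityMeasure (ℙ : Measure Ω)]
    (A E : ℕ → Set Ω)
    (hA : ∀ n, MeasurableSet (A n)) (hE : ∀ n, MeasurableSet (E n))
    (hAindep : iIndepSet A ℙ)
    (hAE : ∀ n, ℙ (A n ∩ E n) = ℙ (A n) * ℙ (E n))
    (hE0 : Tendsto (fun n => ℙ (E n)) atTop (nhds 0))
    (B : ℕ → Set Ω) (hB : ∀ n, B n = A n \ E n)
    (hsum : ∑' n, ℙ (A n) = ∞) :
    ℙ (limsup B atTop) = 1 :=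
  contaminated_borel_cantelli_two_general A E hA hAindep hAE hE0 B hB hsum
end

section
/- Let (A_n) be a sequence of independent events in a probability space with P(A_n) > 0, and let (E_n) be any sequence of events. Define e_n by P(E_n ∩ A_n) = e_n · P(A_n). If ∑_n P(A_n) = ∞ and e_n → 0 as n → ∞, then the events B_n = A_n \ E_n occur infinitely often almost surely, i.e., P(limsup_n B_n) = 1. -/
open MeasureTheory ProbabilityTheory Filter Finset Topology
open scoped ENNReal NNReal

/-!
A Kochen–Stone (second moment) argument. Fix `η > 0` and let `F = [M, n)` with `M` so large that
`e k ≤ η` on `F`. Then `∑_F P(B k) ≥ (1 - η) S` with `S = ∑_F P(A k)`, while pairwise independence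
of the `A k ⊇ B k` gives `∑_{j,k ∈ F} P(B j ∩ B k) ≤ S² + S`. The Chung–Erdős inequality
`(∑ P(B k))² ≤ (∑ P(B j ∩ B k)) · P(⋃ B k)` turns this into `P(⋃_F B k) ≥ 1 - 2η - 1/S`, and `S → ∞`
as `n → ∞`, so every tail union `⋃_{k ≥ m} B k` has probability one.
-/

theorem ENNReal.lintegral_mul_sq_le_sq_mul_sq {α : Type*} [MeasurableSpace α] {μ : Measure α}
    {f g : α → ℝ≥0∞} (hf : AEMeasurable f μ) (hg : AEMeasurable g μ) :
    (∫⁻ a, f a * g a ∂μ) ^ 2 ≤ (∫⁻ a, f a ^ 2 ∂μ) * ∫⁻ a, g a ^ 2 ∂μ := by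
  have h := ENNReal.lintegral_mul_le_Lp_mul_Lq μ Real.HolderConjugate.two_two hf hg
  simp only [Pi.mul_apply, ENNReal.rpow_two] at h
  calc _ ≤ ((∫⁻ a, f a ^ 2 ∂μ) ^ (1 / 2 : ℝ) * (∫⁻ a, g a ^ 2 ∂μ) ^ (1 / 2 : ℝ)) ^ 2 := by
        gcongr
    _ = _ := by
        rw [mul_pow, ← ENNReal.rpow_natCast, ← ENNReal.rpow_natCast, ← ENNReal.rpow_mul,
          ← ENNReal.rpow_mul]
        norm_num

theorem ENNReal.tendsto_sum_Ico_atTop_of_tsum_eq_top {p : ℕ → ℝ≥0∞} (hp : ∑' k, p k = ∞)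
    (hfin : ∀ k, p k ≠ ∞) (M : ℕ) :
    Tendsto (fun n => ∑ k ∈ Ico M n, p k) atTop (𝓝 ∞) := by
  have hM : ∑ k ∈ range M, p k ≠ ∞ := ENNReal.sum_ne_top.2 fun k _ => hfin k
  have h := ENNReal.Tendsto.sub (ENNReal.tendsto_nat_tsum p) tendsto_const_nhds (Or.inr hM)
  rw [hp, ENNReal.top_sub hM] at h
  refine h.congr' ((eventually_ge_atTop M).mono fun n hn => ?_)
  rw [← sum_range_add_sum_Ico p hn, ENNReal.add_sub_cancel_left hM]

theorem ENNReal.one_le_add_two_mul_add_inv_of_sq_le {x η S : ℝ≥0∞} (hx : x ≤ 1) (hS0 : S ≠ 0)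
    (hS : S ≠ ∞) (h : ((1 - η) * S) ^ 2 ≤ (S ^ 2 + S) * x) : 1 ≤ x + 2 * η + S⁻¹ := by
  rcases le_total 1 η with hη | hη
  · calc (1 : ℝ≥0∞) ≤ 2 * η := hη.trans (le_mul_of_one_le_left' one_le_two)
      _ ≤ x + 2 * η + S⁻¹ := le_add_right le_add_self
  lift x to ℝ≥0 using ne_top_of_le_ne_top one_ne_top hx
  lift η to ℝ≥0 using ne_top_of_le_ne_top one_ne_top hη
  lift S to ℝ≥0 using hS
  rw [← ENNReal.coe_inv (by exact_mod_cast hS0)]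
  norm_cast at h hx hη hS0 ⊢
  rw [← NNReal.coe_le_coe] at h hx hη ⊢
  push_cast [NNReal.coe_sub hη] at h hx hη ⊢
  have hS_pos : 0 < (S : ℝ) := by positivity
  have hcleared : (1 - 2 * η) * (S : ℝ) ^ 2 ≤ x * S ^ 2 + S := by
    nlinarith [sq_nonneg ((η : ℝ) * S), x.coe_nonneg]
  have hdiff : (x : ℝ) + 2 * η + (S : ℝ)⁻¹ - 1
      = (x * S ^ 2 + S - (1 - 2 * η) * S ^ 2) / S ^ 2 := by
    field_simp
    ring
  rw [← sub_nonneg, hdiff]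
  exact div_nonneg (by linarith) (by positivity)

theorem ProbabilityTheory.iIndepSet.measure_inter_eq_mul {Ω ι : Type*} [MeasurableSpace Ω]
    {μ : Measure Ω} {s : ι → Set Ω} (h : iIndepSet s μ) {i j : ι} (hij : i ≠ j) :
    μ (s i ∩ s j) = μ (s i) * μ (s j) := by
  classical
  simpa [prod_pair hij] using h.meas_biInter {i, j}

namespace MeasureTheory

variable {Ω ι : Type*} [MeasurableSpace Ω] {μ : Measure Ω}

theorem one_sub_mul_measure_le_measure_diff {s t : Set Ω} {η : ℝ≥0∞} (hs : μ s ≠ ∞)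
    (h : μ (t ∩ s) ≤ η * μ s) : (1 - η) * μ s ≤ μ (s \ t) :=
  calc (1 - η) * μ s = μ s - η * μ s := by rw [ENNReal.sub_mul fun _ _ => hs, one_mul]
    _ ≤ μ s - μ (t ∩ s) := by gcongr
    _ ≤ μ (s \ (t ∩ s)) := le_measure_sdiff
    _ = μ (s \ t) := by rw [Set.sdiff_inter_self_eq_sdiff]

theorem lintegral_sq_sum_indicator_one {s : ι → Set Ω} (hs : ∀ i, MeasurableSet (s i))
    (F : Finset ι) :
    ∫⁻ ω, (∑ i ∈ F, (s i).indicator 1 ω) ^ 2 ∂μ = ∑ i ∈ F, ∑ j ∈ F, μ (s i ∩ s j) := by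
  have hsq : ∀ ω, (∑ i ∈ F, (s i).indicator (1 : Ω → ℝ≥0∞) ω) ^ 2
      = ∑ i ∈ F, ∑ j ∈ F, (s i ∩ s j).indicator 1 ω := fun ω => by
    simp only [sq, sum_mul_sum, Set.inter_indicator_one, Pi.mul_apply]
  have hm : ∀ i j, Measurable ((s i ∩ s j).indicator (1 : Ω → ℝ≥0∞)) := fun i j =>
    measurable_one.indicator ((hs i).inter (hs j))
  simp_rw [hsq]
  rw [lintegral_finsetSum _ fun i _ => Finset.measurable_sum _ fun j _ => hm i j]
  refine sum_congr rfl fun i _ => ?_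
  rw [lintegral_finsetSum _ fun j _ => hm i j]
  exact sum_congr rfl fun j _ => lintegral_indicator_one ((hs i).inter (hs j))

/-- The Chung–Erdős inequality. -/
theorem sq_sum_measure_le_mul_measure_biUnion {s : ι → Set Ω} (hs : ∀ i, MeasurableSet (s i))
    (F : Finset ι) :
    (∑ i ∈ F, μ (s i)) ^ 2 ≤ (∑ i ∈ F, ∑ j ∈ F, μ (s i ∩ s j)) * μ (⋃ i ∈ F, s i) := by
  set U := ⋃ i ∈ F, s i
  have hU : MeasurableSet U := F.measurableSet_biUnion fun i _ => hs i
  set X : Ω → ℝ≥0∞ := fun ω => ∑ i ∈ F, (s i).indicator 1 ω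
  have hXU : ∀ ω, X ω * U.indicator 1 ω = X ω := by
    intro ω
    by_cases hω : ω ∈ U
    · simp [hω]
    · have hX0 : X ω = 0 := sum_eq_zero fun i hi =>
        Set.indicator_of_notMem (fun hωi => hω (Set.mem_biUnion hi hωi)) _
      rw [hX0, zero_mul]
  have hUsq : ∀ ω, U.indicator (1 : Ω → ℝ≥0∞) ω ^ 2 = U.indicator 1 ω := fun ω => by
    rw [sq, ← Pi.mul_apply, ← Set.inter_indicator_one, Set.inter_self]
  have hmean : ∫⁻ ω, X ω ∂μ = ∑ i ∈ F, μ (s i) := by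
    rw [lintegral_finsetSum _ fun i _ => measurable_one.indicator (hs i)]
    exact sum_congr rfl fun i _ => lintegral_indicator_one (hs i)
  calc (∑ i ∈ F, μ (s i)) ^ 2 = (∫⁻ ω, X ω * U.indicator 1 ω ∂μ) ^ 2 := by
        simp_rw [hXU, hmean]
    _ ≤ (∫⁻ ω, X ω ^ 2 ∂μ) * ∫⁻ ω, U.indicator 1 ω ^ 2 ∂μ :=
        ENNReal.lintegral_mul_sq_le_sq_mul_sq
          (Finset.measurable_sum _ fun i _ => measurable_one.indicator (hs i)).aemeasurable
          (measurable_one.indicator hU).aemeasurable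
    _ = _ := by simp_rw [hUsq, lintegral_indicator_one hU, X, lintegral_sq_sum_indicator_one hs]

theorem sum_sum_measure_inter_le_of_subset {A B : ι → Set Ω} (hBA : ∀ i, B i ⊆ A i)
    (hA : Pairwise fun i j => μ (A i ∩ A j) = μ (A i) * μ (A j)) (F : Finset ι) :
    ∑ i ∈ F, ∑ j ∈ F, μ (B i ∩ B j) ≤ (∑ i ∈ F, μ (A i)) ^ 2 + ∑ i ∈ F, μ (A i) := by
  classical
  have hpair : ∀ i j, μ (A i ∩ A j) ≤ μ (A i) * μ (A j) + if i = j then μ (A i) else 0 := by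
    intro i j
    rcases eq_or_ne i j with rfl | hij
    · simp
    · simp [hA hij, hij]
  calc ∑ i ∈ F, ∑ j ∈ F, μ (B i ∩ B j)
      ≤ ∑ i ∈ F, ∑ j ∈ F, (μ (A i) * μ (A j) + if i = j then μ (A i) else 0) := by
        gcongr with i _ j _
        exact (measure_mono (Set.inter_subset_inter (hBA i) (hBA j))).trans (hpair i j)
    _ = _ := by simp [sum_add_distrib, sq, sum_mul_sum]

theorem one_le_measure_biUnion_add_two_mul_add_inv [IsProbabilityMeasure μ] {A B : ι → Set Ω}
    (hB : ∀ i, MeasurableSet (B i)) (hBA : ∀ i, B i ⊆ A i)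
    (hA : Pairwise fun i j => μ (A i ∩ A j) = μ (A i) * μ (A j)) {F : Finset ι} {η : ℝ≥0∞}
    (hη : ∀ i ∈ F, (1 - η) * μ (A i) ≤ μ (B i)) (hF : ∑ i ∈ F, μ (A i) ≠ 0) :
    1 ≤ μ (⋃ i ∈ F, B i) + 2 * η + (∑ i ∈ F, μ (A i))⁻¹ := by
  refine ENNReal.one_le_add_two_mul_add_inv_of_sq_le prob_le_one hF
    (ENNReal.sum_ne_top.2 fun i _ => measure_ne_top μ (A i)) ?_
  calc ((1 - η) * ∑ i ∈ F, μ (A i)) ^ 2 ≤ (∑ i ∈ F, μ (B i)) ^ 2 := by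
        rw [mul_sum]
        gcongr with i hi
        exact hη i hi
    _ ≤ (∑ i ∈ F, ∑ j ∈ F, μ (B i ∩ B j)) * μ (⋃ i ∈ F, B i) :=
        sq_sum_measure_le_mul_measure_biUnion hB F
    _ ≤ _ := by gcongr; exact sum_sum_measure_inter_le_of_subset hBA hA F

theorem measure_limsup_atTop_eq_one_of_forall [IsProbabilityMeasure μ] {s : ℕ → Set Ω}
    (hs : ∀ n, MeasurableSet (s n)) (h : ∀ m, μ (⋃ k ≥ m, s k) = 1) :
    μ (limsup s atTop) = 1 := by
  have hanti : Antitone fun m => ⋃ k ≥ m, s k := fun _ _ hmn =>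
    Set.biUnion_mono (fun _ hk => hmn.trans hk) fun _ _ => le_rfl
  have hmeas : ∀ m, NullMeasurableSet (⋃ k ≥ m, s k) μ := fun m =>
    (MeasurableSet.biUnion (Set.to_countable _) fun k _ => hs k).nullMeasurableSet
  rw [limsup_eq_iInf_iSup_of_nat]
  simp only [Set.iInf_eq_iInter, Set.iSup_eq_iUnion]
  rw [hanti.measure_iInter hmeas ⟨0, measure_ne_top _ _⟩]
  simp [h]

theorem measure_biUnion_ge_eq_one_of_eventually_le [IsProbabilityMeasure μ] {A B : ℕ → Set Ω}
    (hB : ∀ n, MeasurableSet (B n)) (hBA : ∀ n, B n ⊆ A n)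
    (hA : Pairwise fun i j => μ (A i ∩ A j) = μ (A i) * μ (A j)) (hsum : ∑' n, μ (A n) = ∞)
    (hAB : ∀ η : ℝ≥0∞, 0 < η → ∀ᶠ n in atTop, (1 - η) * μ (A n) ≤ μ (B n)) (m : ℕ) :
    μ (⋃ k ≥ m, B k) = 1 := by
  refine le_antisymm prob_le_one (ENNReal.le_of_forall_pos_le_add fun ε hε _ => ?_)
  obtain ⟨N, hN⟩ := eventually_atTop.1 (hAB _ (ENNReal.half_pos (ENNReal.coe_ne_zero.2 hε.ne')))
  set S := fun n => ∑ k ∈ Ico (max m N) n, μ (A k)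
  have hS : Tendsto S atTop (𝓝 ∞) :=
    ENNReal.tendsto_sum_Ico_atTop_of_tsum_eq_top hsum (fun k => measure_ne_top μ (A k)) _
  have hwindow : ∀ᶠ n in atTop, 1 ≤ μ (⋃ k ≥ m, B k) + ε + (S n)⁻¹ := by
    filter_upwards [hS.eventually_ne ENNReal.top_ne_zero] with n hn
    calc 1 ≤ μ (⋃ k ∈ Ico (max m N) n, B k) + 2 * (ε / 2) + (S n)⁻¹ :=
          one_le_measure_biUnion_add_two_mul_add_inv hB hBA hA
            (fun k hk => hN k (le_of_max_le_right (mem_Ico.1 hk).1)) hn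
      _ ≤ μ (⋃ k ≥ m, B k) + ε + (S n)⁻¹ := by
          rw [ENNReal.mul_div_cancel two_ne_zero ENNReal.ofNat_ne_top]
          gcongr μ ?_ + _ + _
          exact Set.iUnion₂_subset fun k hk => Set.subset_iUnion₂ (s := fun k (_ : k ≥ m) => B k) k
            (le_of_max_le_left (mem_Ico.1 hk).1)
  have hlim : Tendsto (fun n => μ (⋃ k ≥ m, B k) + ε + (S n)⁻¹) atTop
      (𝓝 (μ (⋃ k ≥ m, B k) + ε)) := by
    simpa using tendsto_const_nhds.add (tendsto_inv_iff.2 hS)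
  exact ge_of_tendsto hlim hwindow

end MeasureTheory

theorem contaminated_borel_cantelli_prop_general
    {Ω : Type*} [MeasureSpace Ω] [IsProbabilityMeasure (ℙ : Measure Ω)]
    (A E : ℕ → Set Ω)
    (hA : ∀ n, MeasurableSet (A n)) (hE : ∀ n, MeasurableSet (E n))
    (hAindep : iIndepSet A ℙ)
    (e : ℕ → ℝ≥0∞)
    (he : ∀ n, ℙ (E n ∩ A n) = e n * ℙ (A n))
    (he0 : Tendsto e atTop (nhds 0))
    (hsum : ∑' n, ℙ (A n) = ∞)
    (B : ℕ → Set Ω) (hB : ∀ n, B n = A n \ E n) :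
    ℙ (limsup B atTop) = 1 := by
  have hBm : ∀ n, MeasurableSet (B n) := fun n => hB n ▸ (hA n).diff (hE n)
  have hBA : ∀ n, B n ⊆ A n := fun n => hB n ▸ Set.sdiff_subset
  refine measure_limsup_atTop_eq_one_of_forall hBm <| measure_biUnion_ge_eq_one_of_eventually_le
    hBm hBA (fun _ _ => hAindep.measure_inter_eq_mul) hsum fun η hη => ?_
  filter_upwards [he0.eventually_le_const hη] with n hn
  exact hB n ▸ one_sub_mul_measure_le_measure_diff (measure_ne_top _ _)
    ((he n).trans_le (by gcongr))

/-- **Proposition.** Let `A n` be independent events with `P (A n) > 0`, let `E n`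
be any events, and define `e n` by `P (E n ∩ A n) = e n * P (A n)`. If
`∑ P (A n) = ∞` and `e n → 0`, then the events `B n = A n \ E n` occur infinitely
often almost surely, i.e. `P (limsup B) = 1`. -/
theorem contaminated_borel_cantelli_prop
    {Ω : Type*} [MeasureSpace Ω] [IsProbabilityMeasure (ℙ : Measure Ω)]
    (A E : ℕ → Set Ω)
    (hA : ∀ n, MeasurableSet (A n)) (hE : ∀ n, MeasurableSet (E n))
    (hApos : ∀ n, 0 < ℙ (A n))
    (hAindep : iIndepSet A ℙ)
    (e : ℕ → ℝ≥0∞)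
    (he : ∀ n, ℙ (E n ∩ A n) = e n * ℙ (A n))
    (he0 : Tendsto e atTop (nhds 0))
    (hsum : ∑' n, ℙ (A n) = ∞)
    (B : ℕ → Set Ω) (hB : ∀ n, B n = A n \ E n) :
    ℙ (limsup B atTop) = 1 :=
  contaminated_borel_cantelli_prop_general A E hA hE hAindep e he he0 hsum B hB
end

section
/- Let (p_n) and (a_n) be sequences of nonnegative real numbers with ∑_n p_n = ∞ and a_n → 0 as n → ∞. Then there exist real numbers p'_n with 0 ≤ p'_n ≤ p_n for every n such that ∑_n p'_n = ∞ and ∑_n p'_n a_n < ∞. -/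
/-!
Cut `ℕ` into consecutive blocks `[N k, N (k + 1))` on each of which `p` has mass at least `1`,
chosen so late that `a ≤ 2⁻ᵏ` from `N (k + 1)` on. Dividing `p` by its mass on each block gives
`p' ≤ p` with mass exactly `1` per block, so `∑ p' = ∞`, while on block `k + 1` the sum of
`p' a` is at most `2⁻ᵏ`.
-/

open Filter Finset

section Blocks

variable {N : ℕ → ℕ}

theorem sum_range_eq_sum_sum_Ico {M : Type*} [AddCommMonoid M] (hN : Monotone N) (hN0 : N 0 = 0)
    (f : ℕ → M) (K : ℕ) :
    ∑ n ∈ range (N K), f n = ∑ k ∈ range K, ∑ n ∈ Ico (N k) (N (k + 1)), f n := by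
  induction K with
  | zero => simp [hN0]
  | succ K ih => rw [sum_range_succ, ← ih, sum_range_add_sum_Ico _ (hN K.le_succ)]

theorem summable_iff_summable_sum_Ico {f : ℕ → ℝ} (hf : ∀ n, 0 ≤ f n) (hN : StrictMono N)
    (hN0 : N 0 = 0) : Summable f ↔ Summable fun k ↦ ∑ n ∈ Ico (N k) (N (k + 1)), f n := by
  have hblock : ∀ k, 0 ≤ ∑ n ∈ Ico (N k) (N (k + 1)), f n := fun k ↦ sum_nonneg fun n _ ↦ hf n
  constructor
  · refine fun hsum ↦ summable_of_sum_range_le (c := ∑' n, f n) hblock fun K ↦ ?_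
    rw [← sum_range_eq_sum_sum_Ico hN.monotone hN0]
    exact hsum.sum_le_tsum _ fun n _ ↦ hf n
  · refine fun hsum ↦
      summable_of_sum_range_le (c := ∑' k, ∑ n ∈ Ico (N k) (N (k + 1)), f n) hf fun M ↦ ?_
    calc ∑ n ∈ range M, f n ≤ ∑ n ∈ range (N M), f n :=
          sum_le_sum_of_subset_of_nonneg (range_subset_range.2 hN.le_apply) fun n _ _ ↦ hf n
      _ = ∑ k ∈ range M, ∑ n ∈ Ico (N k) (N (k + 1)), f n :=
          sum_range_eq_sum_sum_Ico hN.monotone hN0 f M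
      _ ≤ _ := hsum.sum_le_tsum _ fun k _ ↦ hblock k

theorem exists_strictMono_zero_forall {P : ℕ → ℕ → ℕ → Prop}
    (h : ∀ k m, ∀ᶠ M in atTop, P k m M) :
    ∃ N : ℕ → ℕ, StrictMono N ∧ N 0 = 0 ∧ ∀ k, P k (N k) (N (k + 1)) := by
  choose next hnext using fun k m ↦ ((eventually_gt_atTop m).and (h k m)).exists
  let N : ℕ → ℕ := fun k ↦ Nat.rec 0 next k
  exact ⟨N, strictMono_nat_of_lt_succ fun k ↦ (hnext k (N k)).1, rfl, fun k ↦ (hnext k (N k)).2⟩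

def blockIndex (N : ℕ → ℕ) (n : ℕ) : ℕ :=
  Nat.findGreatest (fun k ↦ N k ≤ n) n

theorem blockIndex_eq (hN : StrictMono N) {k n : ℕ} (hk : N k ≤ n) (hn : n < N (k + 1)) :
    blockIndex N n = k := by
  refine Nat.findGreatest_eq_iff.2 ⟨hN.le_apply.trans hk, fun _ ↦ hk, fun j hkj _ hj ↦ ?_⟩
  exact (hn.trans_le (hN.monotone hkj)).not_ge hj

noncomputable def normalizeOnBlocks {𝕜 : Type*} [DivisionSemiring 𝕜] (N : ℕ → ℕ) (p : ℕ → 𝕜)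
    (n : ℕ) : 𝕜 :=
  p n / ∑ m ∈ Ico (N (blockIndex N n)) (N (blockIndex N n + 1)), p m

theorem sum_Ico_normalizeOnBlocks {𝕜 : Type*} [DivisionSemiring 𝕜] (hN : StrictMono N)
    {p : ℕ → 𝕜} {k : ℕ} (hk : ∑ m ∈ Ico (N k) (N (k + 1)), p m ≠ 0) :
    ∑ n ∈ Ico (N k) (N (k + 1)), normalizeOnBlocks N p n = 1 := by
  have hidx : ∀ n ∈ Ico (N k) (N (k + 1)), blockIndex N n = k := fun n hn ↦
    blockIndex_eq hN (mem_Ico.1 hn).1 (mem_Ico.1 hn).2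
  rw [sum_congr rfl fun n hn ↦ by rw [normalizeOnBlocks, hidx n hn], ← sum_div, div_self hk]

end Blocks

theorem exists_blocks_of_tendsto {p a : ℕ → ℝ}
    (hpsum : Tendsto (fun N => ∑ n ∈ range N, p n) atTop atTop)
    (ha0 : Tendsto a atTop (nhds 0)) :
    ∃ N : ℕ → ℕ, StrictMono N ∧ N 0 = 0 ∧
      ∀ k, 1 ≤ ∑ n ∈ Ico (N k) (N (k + 1)), p n ∧ ∀ n ≥ N (k + 1), a n ≤ (1 / 2) ^ k := by
  refine exists_strictMono_zero_forall
    (P := fun k m M ↦ 1 ≤ ∑ n ∈ Ico m M, p n ∧ ∀ n ≥ M, a n ≤ (1 / 2) ^ k) fun k m ↦ ?_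
  have hmass : ∀ᶠ M in atTop, 1 ≤ ∑ n ∈ Ico m M, p n := by
    filter_upwards [eventually_ge_atTop m, hpsum.eventually_ge_atTop (∑ n ∈ range m, p n + 1)]
      with M hmM hM
    rw [sum_Ico_eq_sub _ hmM]
    linarith
  have hsmall : ∀ᶠ M in atTop, ∀ n ≥ M, a n ≤ (1 / 2) ^ k :=
    eventually_forall_ge_atTop.2 (ha0.eventually_le_const (by positivity))
  exact hmass.and hsmall

/-- **Lemma.** Let `p n` and `a n` be nonnegative reals with `∑ p n = ∞`
(partial sums tend to infinity) and `a n → 0`. Then there exist `p' n` with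
`0 ≤ p' n ≤ p n` for every `n`, such that `∑ p' n = ∞` and `∑ p' n * a n < ∞`. -/
theorem exists_thinned_sequence
    (p a : ℕ → ℝ)
    (hp : ∀ n, 0 ≤ p n) (ha : ∀ n, 0 ≤ a n)
    (hpsum : Tendsto (fun N => ∑ n ∈ Finset.range N, p n) atTop atTop)
    (ha0 : Tendsto a atTop (nhds 0)) :
    ∃ p' : ℕ → ℝ, (∀ n, 0 ≤ p' n) ∧ (∀ n, p' n ≤ p n) ∧
      Tendsto (fun N => ∑ n ∈ Finset.range N, p' n) atTop atTop ∧
      Summable (fun n => p' n * a n) := by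
  obtain ⟨N, hN, hN0, hblock⟩ := exists_blocks_of_tendsto hpsum ha0
  have hmass (k : ℕ) : 1 ≤ ∑ n ∈ Ico (N k) (N (k + 1)), p n := (hblock k).1
  have hp'0 (n : ℕ) : 0 ≤ normalizeOnBlocks N p n := div_nonneg (hp n) (zero_le_one.trans (hmass _))
  have hp'sum (k : ℕ) := sum_Ico_normalizeOnBlocks hN (one_pos.trans_le (hmass k)).ne'
  refine ⟨normalizeOnBlocks N p, hp'0, fun n ↦ div_le_self (hp n) (hmass _), ?_, ?_⟩
  · refine (not_summable_iff_tendsto_nat_atTop_of_nonneg hp'0).1 fun hsum ↦ ?_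
    have := (summable_iff_summable_sum_Ico hp'0 hN hN0).1 hsum
    simp only [hp'sum, summable_const_iff] at this
    exact one_ne_zero this
  · have hterm0 (n : ℕ) := mul_nonneg (hp'0 n) (ha n)
    refine (summable_iff_summable_sum_Ico hterm0 hN hN0).2 ((summable_nat_add_iff 1).1 ?_)
    refine summable_geometric_two.of_nonneg_of_le (fun k ↦ sum_nonneg fun n _ ↦ hterm0 n)
      fun k ↦ ?_
    calc ∑ n ∈ Ico (N (k + 1)) (N (k + 1 + 1)), normalizeOnBlocks N p n * a n
        ≤ ∑ n ∈ Ico (N (k + 1)) (N (k + 1 + 1)), normalizeOnBlocks N p n * (1 / 2) ^ k :=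
          sum_le_sum fun n hn ↦
            mul_le_mul_of_nonneg_left ((hblock k).2 n (mem_Ico.1 hn).1) (hp'0 n)
      _ = (1 / 2) ^ k := by rw [← sum_mul, hp'sum, one_mul]
end

section
/- Fix θ ∈ (0, 1) and define T_0(s) = s / (log(log s))^θ for s > 10. Let s_n = 2n · log(log(√n)) for n ≥ 3 and let (δ_n) be any sequence of real numbers with δ_n − log(log(√n)) → 0 as n → ∞. Then T_0(s_n) − T_0(s_n − δ_n) → ∞ as n → ∞. -/
open Filter Real

/-!
Put `A = s n`, `B = s n - δ n`, `a = log (log A)`, `b = log (log B)`. Then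
`T₀ A - T₀ B = δ n / a ^ θ - B (a ^ θ - b ^ θ) / (a ^ θ b ^ θ)`. Since `log ∘ log` has derivative
`1 / (x log x)`, the correction term is at most `δ n / log B ≤ 1`, while `δ n ≈ log (log √n)`
and `a ≤ 2 log (log √n)` make the main term at least `(2 log (log √n)) ^ (1 - θ) / 4 → ∞`.
-/

lemma rpow_sub_rpow_le_sub {θ a b : ℝ} (hθ : θ ≤ 1) (hb : 1 ≤ b) (hba : b ≤ a) :
    a ^ θ - b ^ θ ≤ a - b := by
  have hb₀ : 0 < b := by linarith
  have hab : 1 ≤ a / b := by rwa [le_div_iff₀ hb₀, one_mul]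
  calc a ^ θ - b ^ θ = b ^ θ * ((a / b) ^ θ - 1) := by
        rw [div_rpow (by linarith) hb₀.le]; field_simp
    _ ≤ b ^ θ * (a / b - 1) := by gcongr; exact rpow_le_self_of_one_le hab hθ
    _ ≤ b * (a / b - 1) := by gcongr; exact rpow_le_self_of_one_le hb hθ
    _ = a - b := by field_simp

lemma log_sub_log_le_sub_div {x y : ℝ} (hx : 0 < x) (hy : 0 < y) :
    log y - log x ≤ (y - x) / x :=
  calc log y - log x = log (y / x) := (log_div hy.ne' hx.ne').symm
    _ ≤ y / x - 1 := log_le_sub_one_of_pos (div_pos hy hx)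
    _ = (y - x) / x := by field_simp

lemma log_log_sub_log_log_le {x y : ℝ} (hx : 1 < x) (hxy : x ≤ y) :
    log (log y) - log (log x) ≤ (y - x) / (x * log x) := by
  have hlx : 0 < log x := log_pos hx
  have hly : 0 < log y := log_pos (hx.trans_le hxy)
  calc log (log y) - log (log x) ≤ (log y - log x) / log x := log_sub_log_le_sub_div hlx hly
    _ ≤ (y - x) / x / log x := by
        gcongr; exact log_sub_log_le_sub_div (by linarith) (by linarith)
    _ = (y - x) / (x * log x) := div_div _ _ _

lemma sub_div_log_log_rpow_sub_one_le {θ x y : ℝ} (hθ₀ : 0 ≤ θ) (hθ₁ : θ ≤ 1) (hx : 1 < x)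
    (hxy : x ≤ y) (hyx : y - x ≤ log x) (hllx : 1 ≤ log (log x)) :
    (y - x) / log (log y) ^ θ - 1 ≤ y / log (log y) ^ θ - x / log (log x) ^ θ := by
  set a := log (log y)
  set b := log (log x)
  have hlx : 0 < log x := log_pos hx
  have hba : b ≤ a := log_le_log hlx (log_le_log (by linarith) hxy)
  have ha : 1 ≤ a ^ θ := one_le_rpow (hllx.trans hba) hθ₀
  have hb : 1 ≤ b ^ θ := one_le_rpow hllx hθ₀
  have hcorr : x * (a ^ θ - b ^ θ) / (a ^ θ * b ^ θ) ≤ 1 :=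
    calc x * (a ^ θ - b ^ θ) / (a ^ θ * b ^ θ) ≤ x * (a ^ θ - b ^ θ) := by
          refine div_le_self (mul_nonneg (by linarith) ?_) (by nlinarith)
          linarith [rpow_le_rpow (by linarith) hba hθ₀]
      _ ≤ x * (a - b) := mul_le_mul_of_nonneg_left (rpow_sub_rpow_le_sub hθ₁ hllx hba) (by linarith)
      _ ≤ x * ((y - x) / (x * log x)) := by gcongr; exact log_log_sub_log_log_le hx hxy
      _ = (y - x) / log x := by field_simp
      _ ≤ 1 := div_le_one_of_le₀ hyx hlx.le
  have hsplit : y / a ^ θ - x / b ^ θ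
      = (y - x) / a ^ θ - x * (a ^ θ - b ^ θ) / (a ^ θ * b ^ θ) := by
    field_simp; ring
  linarith

lemma pos_of_log_eq_two_mul {x u : ℝ} (hx : 1 ≤ x) (hxu : log x = 2 * u) (hu : log u ≠ 0) :
    0 < u := by
  refine lt_of_le_of_ne (by linarith [log_nonneg hx]) ?_
  rintro rfl
  exact hu log_zero

lemma log_log_two_mul_mul_log_le {x u : ℝ} (hx : 1 ≤ x) (hxu : log x = 2 * u) (hlogu : 2 ≤ log u) :
    log (log (2 * x * log u)) ≤ 2 * log u := by
  have hu : 0 < u := pos_of_log_eq_two_mul hx hxu (by linarith)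
  have hly : log (2 * x * log u) ≤ 3 * u := by
    rw [log_mul (by positivity) (by positivity), log_mul two_ne_zero (by positivity), hxu]
    linarith [log_le_sub_one_of_pos two_pos, log_le_sub_one_of_pos (show 0 < log u by linarith),
      log_le_sub_one_of_pos hu]
  have hly₀ : 0 < log (2 * x * log u) := log_pos (by nlinarith)
  calc log (log (2 * x * log u)) ≤ log (3 * u) := log_le_log hly₀ hly
    _ = log 3 + log u := log_mul three_ne_zero hu.ne'
    _ ≤ 2 * log u := by linarith [log_le_sub_one_of_pos three_pos]

lemma two_mul_log_rpow_div_four_sub_one_le {θ x u d : ℝ} (hθ₀ : 0 ≤ θ) (hθ₁ : θ ≤ 1)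
    {T : ℝ → ℝ} (hT : ∀ s > 10, T s = s / log (log s) ^ θ) (hx : 1 ≤ x)
    (hxu : log x = 2 * u) (hℓ : 4 ≤ log u) (hd : |d - log u| ≤ 1) :
    (2 * log u) ^ (1 - θ) / 4 - 1 ≤ T (2 * x * log u) - T (2 * x * log u - d) := by
  set ℓ := log u
  set y := 2 * x * ℓ
  obtain ⟨hdℓ, hℓd⟩ := abs_sub_le_iff.1 hd
  have hu : 0 < u := pos_of_log_eq_two_mul hx hxu (by linarith)
  have hℓu : ℓ ≤ u - 1 := log_le_sub_one_of_pos hu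
  have hx₁₁ : 11 ≤ x := by
    have := add_one_le_exp (2 * u)
    rw [← hxu, exp_log (by linarith)] at this
    linarith
  have hxB : x ≤ y - d := by nlinarith [mul_nonneg (sub_nonneg.2 hx) (by linarith : 0 ≤ 2 * ℓ - 1)]
  have hlogB : 2 * u ≤ log (y - d) := hxu ▸ log_le_log (by linarith) hxB
  have hllB : 1 ≤ log (log (y - d)) := by
    rw [le_log_iff_exp_le (by linarith)]; linarith [exp_one_lt_d9]
  have hlly : 1 ≤ log (log y) :=
    hllB.trans (log_le_log (by linarith) (log_le_log (by linarith) (by linarith)))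
  have hgap := sub_div_log_log_rpow_sub_one_le hθ₀ hθ₁ (by linarith) (by linarith : y - d ≤ y)
    (by linarith) hllB
  rw [sub_sub_cancel] at hgap
  have hmain : (2 * ℓ) ^ (1 - θ) / 4 ≤ d / log (log y) ^ θ :=
    calc (2 * ℓ) ^ (1 - θ) / 4 = (ℓ / 2) / (2 * ℓ) ^ θ := by
          rw [rpow_sub (by positivity), rpow_one]; field_simp; ring
      _ ≤ d / log (log y) ^ θ :=
          div_le_div₀ (by linarith) (by linarith) (by positivity)
            (rpow_le_rpow (by linarith) (log_log_two_mul_mul_log_le hx hxu (by linarith)) hθ₀)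
  rw [hT y (by linarith), hT (y - d) (by linarith)]
  linarith

/-- For `θ ∈ (0,1)`, `T₀ s = s / (log (log s))^θ`, `s n = 2 n log (log (√n))`,
and any `δ n` with `δ n - log (log (√n)) → 0`, one has
`T₀ (s n) - T₀ (s n - δ n) → ∞`. -/
theorem T0_gap_tendsto_atTop
    (θ : ℝ) (hθ : θ ∈ Set.Ioo (0 : ℝ) 1)
    (T₀ : ℝ → ℝ) (hT₀ : ∀ s > 10, T₀ s = s / (Real.log (Real.log s)) ^ θ)
    (s : ℕ → ℝ) (hs : ∀ n ≥ 3, s n = 2 * n * Real.log (Real.log (Real.sqrt n)))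
    (δ : ℕ → ℝ)
    (hδ : Tendsto (fun n => δ n - Real.log (Real.log (Real.sqrt n))) atTop (nhds 0)) :
    Tendsto (fun n => T₀ (s n) - T₀ (s n - δ n)) atTop atTop := by
  obtain ⟨hθ₀, hθ₁⟩ := hθ
  have hL : Tendsto (fun n : ℕ => log (log √n)) atTop atTop :=
    tendsto_log_atTop.comp <| tendsto_log_atTop.comp <|
      tendsto_sqrt_atTop.comp tendsto_natCast_atTop_atTop
  have hminorant : Tendsto (fun n : ℕ => (2 * log (log √n)) ^ (1 - θ) / 4 - 1) atTop atTop :=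
    tendsto_atTop_add_const_right _ _ <| Tendsto.atTop_div_const four_pos <|
      (tendsto_rpow_atTop (by linarith)).comp (hL.const_mul_atTop two_pos)
  refine tendsto_atTop_mono' atTop ?_ hminorant
  filter_upwards [eventually_ge_atTop 3, hL.eventually_ge_atTop 4,
    Metric.tendsto_nhds.1 hδ 1 one_pos] with n hn hLn hδn
  rw [hs n hn]
  exact two_mul_log_rpow_div_four_sub_one_le hθ₀.le hθ₁.le hT₀
    (by exact_mod_cast (by omega : 1 ≤ n)) (by rw [log_sqrt n.cast_nonneg]; ring) hLn
    (by simpa [dist_eq] using hδn.le)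
end
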